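/- arXiv:1511.08208 — 3 statements merged into one kernel-verified Lean document; each statement's English description precedes it below -/
import Mathlib

section
/- Let X2 be defined by the vanishing of χ = s1 x1^4 + s2 x1^3 x2 + s3 x1^2 x2^2 + s4 x1 x2^3 + s5 x1^2 x3 + s6 x1 x2 x3 + s7 x2^2 x3 + s8 x3^2 in the toric variety Bl_1 P^(1,1,2) with homogeneous coordinates x1, x2, x3, x4, x5 (specialized to the chart x4 = x5 = 1 in weighted projective space P^(1,1,2) with coordinates x1, x2, x3 of weights 1,1,2), where the Stanley-Reisner ideal forbids simultaneous vanishing of {x1, x3}, {x2, x3} and {x2, x5} etc. Then the two loci {x1 = 0} ∩ X2 and {x4 = 0} ∩ X2 (with x4 reinstated) define the same point if and only if s7 = 0, and in that case the common point is [x1:x2:x3:x4:x5] = [0:1:1:0:1]. -/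
/-!
On `x₁ = 0` the polynomial `χ` reduces to `s₇ x₂² x₃ x₅ + s₈ x₃² x₄`, and on `x₄ = 0` to
`s₄ x₁ x₂³ x₅² + s₇ x₂² x₃ x₅`. If `s₇ = 0`, each restriction is a single monomial whose other
factors are nonzero, so it forces `x₄ = 0`, resp. `x₁ = 0`. If `s₇ ≠ 0`, the point
`[0 : 1 : 1 : -s₇/s₈ : 1]` lies on `X₂` with `x₄ ≠ 0`.
-/

/-- Lemma D.1 of the paper.  Let `X₂ = {χ = 0}` in `Bl₁ℙ^(1,1,2)` with
homogeneous coordinates `x₁, …, x₅`, where the Stanley–Reisner ideal forbids the simultaneous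
vanishing of `x₂, x₃, x₅` along the relevant loci, and with generic coefficients (`s₄ ≠ 0`,
`s₈ ≠ 0`).  The two sections `{x₁ = 0} ∩ X₂` and `{x₄ = 0} ∩ X₂` merge into a single point —
i.e. every point of `X₂` with `x₁ = 0` also has `x₄ = 0` and vice versa — if and only if
`s₇ = 0`, and in that case the common point is `[x₁:x₂:x₃:x₄:x₅] = [0:1:1:0:1]`, which indeed
lies on `X₂`. -/
theorem stmt_10 {K : Type*} [Field K] (s1 s2 s3 s4 s5 s6 s7 s8 : K)
    (hs4 : s4 ≠ 0) (hs8 : s8 ≠ 0) :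
    let χ : K → K → K → K → K → K := fun x1 x2 x3 x4 x5 =>
      s1 * x1 ^ 4 * x4 ^ 3 * x5 ^ 2 + s2 * x1 ^ 3 * x2 * x4 ^ 2 * x5 ^ 2
        + s3 * x1 ^ 2 * x2 ^ 2 * x4 * x5 + s4 * x1 * x2 ^ 3 * x5 ^ 2
        + s5 * x1 ^ 2 * x3 * x4 ^ 2 * x5 + s6 * x1 * x2 * x3 * x4 * x5
        + s7 * x2 ^ 2 * x3 * x5 + s8 * x3 ^ 2 * x4
    (((∀ x2' x3' x4' x5' : K, x2' ≠ 0 → x3' ≠ 0 → x5' ≠ 0 →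
          χ 0 x2' x3' x4' x5' = 0 → x4' = 0) ∧
      (∀ x1' x2' x3' x5' : K, x2' ≠ 0 → x3' ≠ 0 → x5' ≠ 0 →
          χ x1' x2' x3' 0 x5' = 0 → x1' = 0)) ↔ s7 = 0) ∧
    (s7 = 0 → χ 0 1 1 0 1 = 0) := by
  intro χ
  have χ_x1_zero : ∀ x2 x3 x4 x5,
      χ 0 x2 x3 x4 x5 = s7 * x2 ^ 2 * x3 * x5 + s8 * x3 ^ 2 * x4 := by
    intros; simp only [χ]; ring
  have χ_x4_zero : ∀ x1 x2 x3 x5,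
      χ x1 x2 x3 0 x5 = s4 * x1 * x2 ^ 3 * x5 ^ 2 + s7 * x2 ^ 2 * x3 * x5 := by
    intros; simp only [χ]; ring
  refine ⟨⟨fun ⟨h_x1_section, _⟩ => ?_, fun hs7 => ⟨?_, ?_⟩⟩,
    fun hs7 => by simp [χ_x1_zero, hs7]⟩
  · have h_on_X₂ : χ 0 1 1 (-s7 / s8) 1 = 0 := by
      rw [χ_x1_zero]; field_simp; ring
    simpa [hs8] using h_x1_section 1 1 _ 1 one_ne_zero one_ne_zero one_ne_zero h_on_X₂
  · intro x2 x3 x4 x5 _ h3 _ h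
    simpa [χ_x1_zero, hs7, hs8, h3] using h
  · intro x1 x2 x3 x5 h2 _ h5 h
    simpa [χ_x4_zero, hs7, hs4, h2, h5] using h
end

section
/- Let f and g be the polynomials in Q[s21, s22, s32, s42, s52, s62, s72, s82] given by f = -(1/48) s62^4 + (1/6) s52 s62^2 s72 - (1/3) s52^2 s72^2 - (1/2) s42 s52 s62 s82 + (1/6) s32 s62^2 s82 + (1/3) s32 s52 s72 s82 - (1/2) s22 s62 s72 s82 + s21 s72^2 s82 - (1/3) s32^2 s82^2 + s22 s42 s82^2, and g the corresponding degree-6 expression from the paper (the Weierstrass coefficient g of the quartic model, equation (g2g3)). Then the discriminant Δ = 4 f^3 + 27 g^2 is divisible by s82^2 in the polynomial ring Q[s21, s22, s32, s42, s52, s62, s72, s82]. -/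
/-!
At `s82 = 0` the coefficients reduce to `f₀ = -3u²`, `g₀ = 2u³` with `u = (s62² - 4 s52 s72)/12`,
so `4f₀³ + 27g₀² = 0`. The coefficient `g₁` of `s82` in `g` is `-u` times the coefficient `f₁`
of `s82` in `f`, so the linear term `12f₀²f₁ + 54g₀g₁ = 108u³(u f₁ + g₁)` of `Δ` vanishes too.
-/

open MvPolynomial

theorem sq_dvd_discriminant_of_nodal {R : Type*} [CommRing R] (u b c d s : R) :
    s ^ 2 ∣ 4 * (-3 * u ^ 2 + b * s + c * s ^ 2) ^ 3 + 27 * (2 * u ^ 3 - u * b * s + d * s ^ 2) ^ 2 :=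
  ⟨108 * u ^ 3 * (u * c + d) - 36 * u ^ 2 * (b + c * s) ^ 2 + 4 * s * (b + c * s) ^ 3
    + 27 * (d * s - u * b) ^ 2, by ring⟩

/-- For the Weierstrass coefficients `f` and `g` of the quartic model (paper,
eq. (g2g3)), regarded as polynomials in `ℚ[s21, s22, s32, s42, s52, s62, s72, s82]` (with
`s21 = X 0`, `s22 = X 1`, `s32 = X 2`, `s42 = X 3`, `s52 = X 4`, `s62 = X 5`, `s72 = X 6`,
`s82 = X 7`), the discriminant `Δ = 4f³ + 27g²` is divisible by `s82²`, encoding the generic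
`I₂` (SU(2)) Kodaira fiber at `s82 = 0`. -/
theorem stmt_12 :
    let s21 : MvPolynomial (Fin 8) ℚ := X 0
    let s22 : MvPolynomial (Fin 8) ℚ := X 1
    let s32 : MvPolynomial (Fin 8) ℚ := X 2
    let s42 : MvPolynomial (Fin 8) ℚ := X 3
    let s52 : MvPolynomial (Fin 8) ℚ := X 4
    let s62 : MvPolynomial (Fin 8) ℚ := X 5
    let s72 : MvPolynomial (Fin 8) ℚ := X 6
    let s82 : MvPolynomial (Fin 8) ℚ := X 7
    let f : MvPolynomial (Fin 8) ℚ :=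
      -(C (1/48 : ℚ)) * s62 ^ 4 + C (1/6 : ℚ) * s52 * s62 ^ 2 * s72
        - C (1/3 : ℚ) * s52 ^ 2 * s72 ^ 2 - C (1/2 : ℚ) * s42 * s52 * s62 * s82
        + C (1/6 : ℚ) * s32 * s62 ^ 2 * s82 + C (1/3 : ℚ) * s32 * s52 * s72 * s82
        - C (1/2 : ℚ) * s22 * s62 * s72 * s82 + s21 * s72 ^ 2 * s82
        - C (1/3 : ℚ) * s32 ^ 2 * s82 ^ 2 + s22 * s42 * s82 ^ 2
    let g : MvPolynomial (Fin 8) ℚ :=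
      C (1/864 : ℚ) * s62 ^ 6 - C (1/72 : ℚ) * s52 * s62 ^ 4 * s72
        + C (1/18 : ℚ) * s52 ^ 2 * s62 ^ 2 * s72 ^ 2 - C (2/27 : ℚ) * s52 ^ 3 * s72 ^ 3
        + C (1/24 : ℚ) * s42 * s52 * s62 ^ 3 * s82 - C (1/72 : ℚ) * s32 * s62 ^ 4 * s82
        - C (1/6 : ℚ) * s42 * s52 ^ 2 * s62 * s72 * s82
        + C (1/36 : ℚ) * s32 * s52 * s62 ^ 2 * s72 * s82
        + C (1/24 : ℚ) * s22 * s62 ^ 3 * s72 * s82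
        + C (1/9 : ℚ) * s32 * s52 ^ 2 * s72 ^ 2 * s82
        - C (1/6 : ℚ) * s22 * s52 * s62 * s72 ^ 2 * s82
        - C (1/12 : ℚ) * s21 * s62 ^ 2 * s72 ^ 2 * s82
        + C (1/3 : ℚ) * s21 * s52 * s72 ^ 3 * s82
        + C (1/4 : ℚ) * s42 ^ 2 * s52 ^ 2 * s82 ^ 2
        - C (1/6 : ℚ) * s32 * s42 * s52 * s62 * s82 ^ 2
        + C (1/18 : ℚ) * s32 ^ 2 * s62 ^ 2 * s82 ^ 2
        - C (1/12 : ℚ) * s22 * s42 * s62 ^ 2 * s82 ^ 2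
        + C (1/9 : ℚ) * s32 ^ 2 * s52 * s72 * s82 ^ 2
        - C (1/6 : ℚ) * s22 * s42 * s52 * s72 * s82 ^ 2
        - C (1/6 : ℚ) * s22 * s32 * s62 * s72 * s82 ^ 2
        + s21 * s42 * s62 * s72 * s82 ^ 2
        + C (1/4 : ℚ) * s22 ^ 2 * s72 ^ 2 * s82 ^ 2
        - C (2/3 : ℚ) * s21 * s32 * s72 ^ 2 * s82 ^ 2
        - C (2/27 : ℚ) * s32 ^ 3 * s82 ^ 3
        + C (1/3 : ℚ) * s22 * s32 * s42 * s82 ^ 3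
        - s21 * s42 ^ 2 * s82 ^ 3
    s82 ^ 2 ∣ 4 * f ^ 3 + 27 * g ^ 2 := by
  intro s21 s22 s32 s42 s52 s62 s72 s82 f g
  set u := C (1/12 : ℚ) * (s62 ^ 2 - 4 * s52 * s72)
  set b := -C (1/2 : ℚ) * s42 * s52 * s62 + C (1/6 : ℚ) * s32 * s62 ^ 2
    + C (1/3 : ℚ) * s32 * s52 * s72 - C (1/2 : ℚ) * s22 * s62 * s72 + s21 * s72 ^ 2
  -- `ring` treats each `C q` as an atom, so compare polynomial functions on `ℚ⁸` instead.
  have hf : f = -3 * u ^ 2 + b * s82 + (s22 * s42 - C (1/3 : ℚ) * s32 ^ 2) * s82 ^ 2 := by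
    apply MvPolynomial.funext; intro x
    simp only [f, u, b, s21, s22, s32, s42, s52, s62, s72, s82, map_add, map_sub, map_mul,
      map_pow, map_neg, map_ofNat, eval_C, eval_X]
    ring
  have hg : g = 2 * u ^ 3 - u * b * s82 + (C (1/4 : ℚ) * s42 ^ 2 * s52 ^ 2
      - C (1/6 : ℚ) * s32 * s42 * s52 * s62 + C (1/18 : ℚ) * s32 ^ 2 * s62 ^ 2
      - C (1/12 : ℚ) * s22 * s42 * s62 ^ 2 + C (1/9 : ℚ) * s32 ^ 2 * s52 * s72
      - C (1/6 : ℚ) * s22 * s42 * s52 * s72 - C (1/6 : ℚ) * s22 * s32 * s62 * s72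
      + s21 * s42 * s62 * s72 + C (1/4 : ℚ) * s22 ^ 2 * s72 ^ 2
      - C (2/3 : ℚ) * s21 * s32 * s72 ^ 2 + (C (1/3 : ℚ) * s22 * s32 * s42
      - C (2/27 : ℚ) * s32 ^ 3 - s21 * s42 ^ 2) * s82) * s82 ^ 2 := by
    apply MvPolynomial.funext; intro x
    simp only [g, u, b, s21, s22, s32, s42, s52, s62, s72, s82, map_add, map_sub, map_mul,
      map_pow, map_neg, map_ofNat, eval_C, eval_X]
    ring
  rw [hf, hg]
  exact sq_dvd_discriminant_of_nodal ..
end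

section
/- Let s13, s31, s72, s82 and U be indeterminates. Then the difference of the two degree-six Weierstrass coefficients g_χ^+ and g_χ'^+ arising from the two paths in the stable-degeneration diagram satisfies g_χ^+ - g_χ'^+ = (2/3) U^6 s13 s31 s72^2 s82^2; in particular, whenever s13 s31 s72 s82 ≠ 0, the operations of passing to Weierstrass form and taking the stable degeneration limit do not commute, while the coefficients f satisfy f_χ^+ = f_χ'^+. -/
open MvPolynomial

/-- The short-Weierstrass coefficient `f` of the quartic hypersurface
`s₁x₁⁴ + s₂x₁³x₂ + s₃x₁²x₂² + s₄x₁x₂³ + s₅x₁²x₃ + s₆x₁x₂x₃ + s₇x₂²x₃ + s₈x₃² = 0` in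
`ℙ^(1,1,2)`, as a function of the coefficients `s = (s₁, …, s₈)`, obtained via the Tate form
of Appendix A of the paper and the standard formulas `f = -(b₂² - 24b₄)/48`. -/
noncomputable def quarticWeierstrassF {A : Type*} [CommRing A] [Algebra ℚ A]
    (s : Fin 8 → A) : A :=
  let a1 := s 5
  let a2 := -(s 4 * s 6) - s 2 * s 7
  let a3 := -(s 3 * s 4 * s 7) - s 1 * s 6 * s 7
  let a4 := s 2 * s 4 * s 6 * s 7 + s 0 * s 6 ^ 2 * s 7 + s 1 * s 3 * s 7 ^ 2
  let b2 := a1 ^ 2 + 4 * a2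
  let b4 := a1 * a3 + 2 * a4
  (-(1 : ℚ) / 48) • (b2 ^ 2 - 24 * b4)

/-- The short-Weierstrass coefficient `g` of the quartic hypersurface in `ℙ^(1,1,2)`, as a
function of the coefficients `s = (s₁, …, s₈)`, via `g = (b₂³ - 36b₂b₄ + 216b₆)/864`. -/
noncomputable def quarticWeierstrassG {A : Type*} [CommRing A] [Algebra ℚ A]
    (s : Fin 8 → A) : A :=
  let a1 := s 5
  let a2 := -(s 4 * s 6) - s 2 * s 7
  let a3 := -(s 3 * s 4 * s 7) - s 1 * s 6 * s 7
  let a4 := s 2 * s 4 * s 6 * s 7 + s 0 * s 6 ^ 2 * s 7 + s 1 * s 3 * s 7 ^ 2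
  let a6 := -(s 0 * s 2 * s 6 ^ 2 * s 7 ^ 2) - s 0 * s 3 ^ 2 * s 7 ^ 3
    + s 3 * s 6 * (-(s 1 * s 4 * s 7 ^ 2) + s 0 * s 5 * s 7 ^ 2)
  let b2 := a1 ^ 2 + 4 * a2
  let b4 := a1 * a3 + 2 * a4
  let b6 := a3 ^ 2 + 4 * a6
  ((1 : ℚ) / 864) • (b2 ^ 3 - 36 * b2 * b4 + 216 * b6)

/-!
In `s₁ = s11 U² + s12 UV + s13 V²` and `s₃ = s31 U² + s32 UV` the parts `s13 V²` and `s31 U²`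
lie on opposite sides of the stable degeneration, but the monomial `s₁s₃s₇²s₈²` of `g` (with
coefficient `-2/3`) multiplies them into the middle term `U⁶V⁶` of `g_χ`. Splitting `g_χ` thus
keeps `-(2/3) s13 s31 s72² s82² U⁶`, whereas `χ⁺` has dropped `s31` beforehand; expanding `g_χ`
and `f_χ` shows that this is the only discrepancy. The coefficients `c_k`, `d_k` are pinned down
by the hypotheses: setting `U = 1` turns `V` into the variable of a one-variable polynomial ring
over the other indeterminates, where coefficients can be compared.
-/

namespace MvPolynomial

variable {R σ τ : Type*} [CommSemiring R] [DecidableEq σ]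

noncomputable def dehomogenize (u v : σ) : MvPolynomial σ R →ₐ[R] Polynomial (MvPolynomial σ R) :=
  aeval fun i => if i = v then Polynomial.X else if i = u then 1 else Polynomial.C (X i)

@[simp]
lemma dehomogenize_X (u v w : σ) : dehomogenize (R := R) u v (X w) =
    if w = v then Polynomial.X else if w = u then 1 else Polynomial.C (X w) :=
  aeval_X _ w

lemma dehomogenize_rename {ι : τ → σ} {u v : σ} (hu : u ∉ Set.range ι) (hv : v ∉ Set.range ι)
    (p : MvPolynomial τ R) : dehomogenize u v (rename ι p) = Polynomial.C (rename ι p) := by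
  have hvj : ∀ j, ι j ≠ v := fun j h => hv ⟨j, h⟩
  have huj : ∀ j, ι j ≠ u := fun j h => hu ⟨j, h⟩
  have h : (dehomogenize u v).comp (rename ι) = (Polynomial.CAlgHom (R := R)).comp (rename ι) :=
    algHom_ext fun j => by simp [hvj, huj]
  exact AlgHom.congr_fun h p

lemma coeff_dehomogenize_sum_rename_mul_X_pow {ι : τ → σ} {u v : σ} (hu : u ∉ Set.range ι)
    (hv : v ∉ Set.range ι) (huv : u ≠ v) {n : ℕ} (a : Fin (n + 1) → MvPolynomial τ R)
    (k : Fin (n + 1)) :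
    (dehomogenize u v (∑ j, rename ι (a j) * X u ^ (n - j : ℕ) * X v ^ (j : ℕ))).coeff k
      = rename ι (a k) := by
  simp only [map_sum, map_mul, map_pow, dehomogenize_rename hu hv, dehomogenize_X, if_neg huv,
    Polynomial.finsetSum_coeff]
  simp [Fin.val_eq_val]

lemma rename_eq_of_sum_rename_mul_X_pow_eq {ι : τ → σ} {u v : σ} (hu : u ∉ Set.range ι)
    (hv : v ∉ Set.range ι) (huv : u ≠ v) {n : ℕ} {a b : Fin (n + 1) → MvPolynomial τ R}
    (h : ∑ j, rename ι (a j) * X u ^ (n - j : ℕ) * X v ^ (j : ℕ)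
      = ∑ j, rename ι (b j) * X u ^ (n - j : ℕ) * X v ^ (j : ℕ)) (k : Fin (n + 1)) :
    rename ι (a k) = rename ι (b k) := by
  rw [← coeff_dehomogenize_sum_rename_mul_X_pow hu hv huv a, h,
    coeff_dehomogenize_sum_rename_mul_X_pow hu hv huv]

end MvPolynomial

section ChiCoefficients

local notation "s₁₁" => (X 0 : MvPolynomial (Fin 12) ℚ)
local notation "s₁₂" => (X 1 : MvPolynomial (Fin 12) ℚ)
local notation "s₁₃" => (X 2 : MvPolynomial (Fin 12) ℚ)
local notation "s₂₁" => (X 3 : MvPolynomial (Fin 12) ℚ)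
local notation "s₂₂" => (X 4 : MvPolynomial (Fin 12) ℚ)
local notation "s₃₁" => (X 5 : MvPolynomial (Fin 12) ℚ)
local notation "s₃₂" => (X 6 : MvPolynomial (Fin 12) ℚ)
local notation "s₄₂" => (X 7 : MvPolynomial (Fin 12) ℚ)
local notation "s₅₂" => (X 8 : MvPolynomial (Fin 12) ℚ)
local notation "s₆₂" => (X 9 : MvPolynomial (Fin 12) ℚ)
local notation "s₇₂" => (X 10 : MvPolynomial (Fin 12) ℚ)
local notation "s₈₂" => (X 11 : MvPolynomial (Fin 12) ℚ)

noncomputable def chiWeierstrassGCoeff (k : ℕ) : MvPolynomial (Fin 12) ℚ :=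
  (1 / 864 : ℚ) • match k with
  | 3 => -64 * s₃₁ ^ 3 * s₈₂ ^ 3
  | 4 => -576 * s₁₁ * s₃₁ * s₇₂ ^ 2 * s₈₂ ^ 2 + 216 * s₂₁ ^ 2 * s₇₂ ^ 2 * s₈₂ ^ 2
      + 288 * s₂₁ * s₃₁ * s₄₂ * s₈₂ ^ 3 - 144 * s₂₁ * s₃₁ * s₆₂ * s₇₂ * s₈₂ ^ 2
      - 192 * s₃₁ ^ 2 * s₃₂ * s₈₂ ^ 3 + 96 * s₃₁ ^ 2 * s₅₂ * s₇₂ * s₈₂ ^ 2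
      + 48 * s₃₁ ^ 2 * s₆₂ ^ 2 * s₈₂ ^ 2
  | 5 => -576 * s₁₁ * s₃₂ * s₇₂ ^ 2 * s₈₂ ^ 2 - 864 * s₁₁ * s₄₂ ^ 2 * s₈₂ ^ 3
      + 864 * s₁₁ * s₄₂ * s₆₂ * s₇₂ * s₈₂ ^ 2 + 288 * s₁₁ * s₅₂ * s₇₂ ^ 3 * s₈₂
      - 72 * s₁₁ * s₆₂ ^ 2 * s₇₂ ^ 2 * s₈₂ - 576 * s₁₂ * s₃₁ * s₇₂ ^ 2 * s₈₂ ^ 2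
      + 432 * s₂₁ * s₂₂ * s₇₂ ^ 2 * s₈₂ ^ 2 + 288 * s₂₁ * s₃₂ * s₄₂ * s₈₂ ^ 3
      - 144 * s₂₁ * s₃₂ * s₆₂ * s₇₂ * s₈₂ ^ 2 - 144 * s₂₁ * s₄₂ * s₅₂ * s₇₂ * s₈₂ ^ 2
      - 72 * s₂₁ * s₄₂ * s₆₂ ^ 2 * s₈₂ ^ 2 - 144 * s₂₁ * s₅₂ * s₆₂ * s₇₂ ^ 2 * s₈₂
      + 36 * s₂₁ * s₆₂ ^ 3 * s₇₂ * s₈₂ + 288 * s₂₂ * s₃₁ * s₄₂ * s₈₂ ^ 3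
      - 144 * s₂₂ * s₃₁ * s₆₂ * s₇₂ * s₈₂ ^ 2 - 192 * s₃₁ * s₃₂ ^ 2 * s₈₂ ^ 3
      + 192 * s₃₁ * s₃₂ * s₅₂ * s₇₂ * s₈₂ ^ 2 + 96 * s₃₁ * s₃₂ * s₆₂ ^ 2 * s₈₂ ^ 2
      - 144 * s₃₁ * s₄₂ * s₅₂ * s₆₂ * s₈₂ ^ 2 + 96 * s₃₁ * s₅₂ ^ 2 * s₇₂ ^ 2 * s₈₂
      + 24 * s₃₁ * s₅₂ * s₆₂ ^ 2 * s₇₂ * s₈₂ - 12 * s₃₁ * s₆₂ ^ 4 * s₈₂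
  | 6 => -576 * s₁₂ * s₃₂ * s₇₂ ^ 2 * s₈₂ ^ 2 - 864 * s₁₂ * s₄₂ ^ 2 * s₈₂ ^ 3
      + 864 * s₁₂ * s₄₂ * s₆₂ * s₇₂ * s₈₂ ^ 2 + 288 * s₁₂ * s₅₂ * s₇₂ ^ 3 * s₈₂
      - 72 * s₁₂ * s₆₂ ^ 2 * s₇₂ ^ 2 * s₈₂ - 576 * s₁₃ * s₃₁ * s₇₂ ^ 2 * s₈₂ ^ 2
      + 216 * s₂₂ ^ 2 * s₇₂ ^ 2 * s₈₂ ^ 2 + 288 * s₂₂ * s₃₂ * s₄₂ * s₈₂ ^ 3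
      - 144 * s₂₂ * s₃₂ * s₆₂ * s₇₂ * s₈₂ ^ 2 - 144 * s₂₂ * s₄₂ * s₅₂ * s₇₂ * s₈₂ ^ 2
      - 72 * s₂₂ * s₄₂ * s₆₂ ^ 2 * s₈₂ ^ 2 - 144 * s₂₂ * s₅₂ * s₆₂ * s₇₂ ^ 2 * s₈₂
      + 36 * s₂₂ * s₆₂ ^ 3 * s₇₂ * s₈₂ - 64 * s₃₂ ^ 3 * s₈₂ ^ 3 + 96 * s₃₂ ^ 2 * s₅₂ * s₇₂ * s₈₂ ^ 2
      + 48 * s₃₂ ^ 2 * s₆₂ ^ 2 * s₈₂ ^ 2 - 144 * s₃₂ * s₄₂ * s₅₂ * s₆₂ * s₈₂ ^ 2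
      + 96 * s₃₂ * s₅₂ ^ 2 * s₇₂ ^ 2 * s₈₂ + 24 * s₃₂ * s₅₂ * s₆₂ ^ 2 * s₇₂ * s₈₂
      - 12 * s₃₂ * s₆₂ ^ 4 * s₈₂ + 216 * s₄₂ ^ 2 * s₅₂ ^ 2 * s₈₂ ^ 2
      - 144 * s₄₂ * s₅₂ ^ 2 * s₆₂ * s₇₂ * s₈₂ + 36 * s₄₂ * s₅₂ * s₆₂ ^ 3 * s₈₂
      - 64 * s₅₂ ^ 3 * s₇₂ ^ 3 + 48 * s₅₂ ^ 2 * s₆₂ ^ 2 * s₇₂ ^ 2 - 12 * s₅₂ * s₆₂ ^ 4 * s₇₂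
      + s₆₂ ^ 6
  | 7 => -576 * s₁₃ * s₃₂ * s₇₂ ^ 2 * s₈₂ ^ 2 - 864 * s₁₃ * s₄₂ ^ 2 * s₈₂ ^ 3
      + 864 * s₁₃ * s₄₂ * s₆₂ * s₇₂ * s₈₂ ^ 2 + 288 * s₁₃ * s₅₂ * s₇₂ ^ 3 * s₈₂
      - 72 * s₁₃ * s₆₂ ^ 2 * s₇₂ ^ 2 * s₈₂
  | _ => 0

noncomputable def chiWeierstrassFCoeff (k : ℕ) : MvPolynomial (Fin 12) ℚ :=
  (-1 / 48 : ℚ) • match k with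
  | 2 => 16 * s₃₁ ^ 2 * s₈₂ ^ 2
  | 3 => -48 * s₁₁ * s₇₂ ^ 2 * s₈₂ - 48 * s₂₁ * s₄₂ * s₈₂ ^ 2 + 24 * s₂₁ * s₆₂ * s₇₂ * s₈₂
      + 32 * s₃₁ * s₃₂ * s₈₂ ^ 2 - 16 * s₃₁ * s₅₂ * s₇₂ * s₈₂ - 8 * s₃₁ * s₆₂ ^ 2 * s₈₂
  | 4 => -48 * s₁₂ * s₇₂ ^ 2 * s₈₂ - 48 * s₂₂ * s₄₂ * s₈₂ ^ 2 + 24 * s₂₂ * s₆₂ * s₇₂ * s₈₂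
      + 16 * s₃₂ ^ 2 * s₈₂ ^ 2 - 16 * s₃₂ * s₅₂ * s₇₂ * s₈₂ - 8 * s₃₂ * s₆₂ ^ 2 * s₈₂
      + 24 * s₄₂ * s₅₂ * s₆₂ * s₈₂ + 16 * s₅₂ ^ 2 * s₇₂ ^ 2 - 8 * s₅₂ * s₆₂ ^ 2 * s₇₂ + s₆₂ ^ 4
  | 5 => -48 * s₁₃ * s₇₂ ^ 2 * s₈₂
  | _ => 0

end ChiCoefficients

noncomputable def chi : Fin 8 → MvPolynomial (Fin 15) ℚ :=
  ![X 0 * X 12 ^ 2 + X 1 * X 12 * X 13 + X 2 * X 13 ^ 2,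
    X 3 * X 12 ^ 2 + X 4 * X 12 * X 13, X 5 * X 12 ^ 2 + X 6 * X 12 * X 13,
    X 7 * X 12 * X 13, X 8 * X 12 * X 13, X 9 * X 12 * X 13, X 10 * X 12 * X 13,
    X 11 * X 12 * X 13]

theorem quarticWeierstrassG_chi :
    quarticWeierstrassG chi
      = ∑ k : Fin 13, rename (Fin.castLE (by norm_num : 12 ≤ 15)) (chiWeierstrassGCoeff k)
          * X 12 ^ (12 - (k : ℕ)) * X 13 ^ (k : ℕ) := by
  rw [Fin.sum_univ_eq_sum_range (fun k => rename (Fin.castLE (by norm_num : 12 ≤ 15))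
    (chiWeierstrassGCoeff k) * X 12 ^ (12 - k) * X 13 ^ k)]
  simp only [Finset.sum_range_succ, Finset.sum_range_zero, chiWeierstrassGCoeff,
    quarticWeierstrassG, chi]
  simp [map_ofNat, smul_eq_C_mul]
  ring

theorem quarticWeierstrassF_chi :
    quarticWeierstrassF chi
      = ∑ k : Fin 9, rename (Fin.castLE (by norm_num : 12 ≤ 15)) (chiWeierstrassFCoeff k)
          * X 12 ^ (8 - (k : ℕ)) * X 13 ^ (k : ℕ) := by
  rw [Fin.sum_univ_eq_sum_range (fun k => rename (Fin.castLE (by norm_num : 12 ≤ 15))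
    (chiWeierstrassFCoeff k) * X 12 ^ (8 - k) * X 13 ^ k)]
  simp only [Finset.sum_range_succ, Finset.sum_range_zero, chiWeierstrassFCoeff,
    quarticWeierstrassF, chi]
  simp [map_ofNat, smul_eq_C_mul]
  ring

/-- Appendix E of the paper: non-commutativity of stable degeneration and the
map to Weierstrass form.  Work in `ℚ[s11, s12, s13, s21, s22, s31, s32, s42, s52, s62, s72,
s82, U, V, μ]` (variables `X 0, …, X 14`).  The K3 hypersurface `χ` has coefficients
`s₁ = s11·U² + s12·U·V + s13·V²`, `sᵢ = s_{i1}·U² + s_{i2}·U·V` for `i = 2, 3` and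
`sᵢ = s_{i2}·U·V` for `4 ≤ i ≤ 8`; its half `χ⁺` has coefficients `s₁⁺ = s12·U + s13·μ`,
`sᵢ⁺ = s_{i2}·U`.  Writing the Weierstrass coefficients of the full `χ` as
`g_χ = Σ_{k=0}^{12} c_k U^{12-k} V^k` and `f_χ = Σ_{k=0}^{8} d_k U^{8-k} V^k` with `c_k, d_k`
polynomials in the `s`-variables only, the "split-after-Weierstrass" coefficients are
`g'⁺ = Σ_{j=0}^{6} c_{j+6} U^{6-j} μ^j` and `f'⁺ = Σ_{j=0}^{4} d_{j+4} U^{4-j} μ^j`.  Then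
`g_χ⁺ - g'⁺ = (2/3)·U⁶·s13·s31·s72²·s82²` while `f_χ⁺ = f'⁺`; in particular, whenever
`s13·s31·s72·s82 ≠ 0` the two operations do not commute. -/
theorem stmt_16 :
    let R := MvPolynomial (Fin 15) ℚ
    let s11 : R := X 0
    let s12 : R := X 1
    let s13 : R := X 2
    let s21 : R := X 3
    let s22 : R := X 4
    let s31 : R := X 5
    let s32 : R := X 6
    let s42 : R := X 7
    let s52 : R := X 8
    let s62 : R := X 9
    let s72 : R := X 10
    let s82 : R := X 11
    let U : R := X 12
    let V : R := X 13
    let μ : R := X 14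
    let ρ : MvPolynomial (Fin 12) ℚ →ₐ[ℚ] R :=
      rename (Fin.castLE (by norm_num : (12 : ℕ) ≤ 15))
    let sfull : Fin 8 → R :=
      ![s11 * U ^ 2 + s12 * U * V + s13 * V ^ 2, s21 * U ^ 2 + s22 * U * V,
        s31 * U ^ 2 + s32 * U * V, s42 * U * V, s52 * U * V, s62 * U * V,
        s72 * U * V, s82 * U * V]
    let splus : Fin 8 → R :=
      ![s12 * U + s13 * μ, s22 * U, s32 * U, s42 * U, s52 * U, s62 * U, s72 * U, s82 * U]
    ∀ (c : Fin 13 → MvPolynomial (Fin 12) ℚ) (d : Fin 9 → MvPolynomial (Fin 12) ℚ),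
      quarticWeierstrassG sfull
        = ∑ k : Fin 13, ρ (c k) * U ^ (12 - (k : ℕ)) * V ^ (k : ℕ) →
      quarticWeierstrassF sfull
        = ∑ k : Fin 9, ρ (d k) * U ^ (8 - (k : ℕ)) * V ^ (k : ℕ) →
      (quarticWeierstrassG splus
          - ∑ j : Fin 7, ρ (c ⟨(j : ℕ) + 6, by have := j.isLt; omega⟩)
              * U ^ (6 - (j : ℕ)) * μ ^ (j : ℕ)
        = ((2 : ℚ) / 3) • (U ^ 6 * s13 * s31 * s72 ^ 2 * s82 ^ 2)) ∧
      quarticWeierstrassF splus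
        = ∑ j : Fin 5, ρ (d ⟨(j : ℕ) + 4, by have := j.isLt; omega⟩)
            * U ^ (4 - (j : ℕ)) * μ ^ (j : ℕ) := by
  dsimp only
  intro c d hg hf
  have hU : (12 : Fin 15) ∉ Set.range (Fin.castLE (by norm_num : 12 ≤ 15)) := by
    simp [Fin.range_castLE]
  have hV : (13 : Fin 15) ∉ Set.range (Fin.castLE (by norm_num : 12 ≤ 15)) := by
    simp [Fin.range_castLE]
  have hc := rename_eq_of_sum_rename_mul_X_pow_eq hU hV (by decide)
    (hg.symm.trans quarticWeierstrassG_chi)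
  have hd := rename_eq_of_sum_rename_mul_X_pow_eq hU hV (by decide)
    (hf.symm.trans quarticWeierstrassF_chi)
  constructor
  · -- leaves `1/864` as the only rational scalar, which `ring` can then treat as an atom
    rw [show (2 / 3 : ℚ) = 1 / 864 * 576 by norm_num, ← smul_smul]
    simp only [Fin.sum_univ_seven, hc]
    simp [chiWeierstrassGCoeff, quarticWeierstrassG, smul_eq_C_mul, map_ofNat]
    ring
  · simp only [Fin.sum_univ_five, hd]
    simp [chiWeierstrassFCoeff, quarticWeierstrassF, smul_eq_C_mul, map_ofNat]
    ring
end
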